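/- Let p ≥ 1 and let X be a real random variable with density f. Then E[|X|^p]^{1/p} ≥ 2^{h(X)} / (2 Γ((p+1)/p) (p e)^{1/p}), where h(X) is the differential entropy of X in bits (assumed finite). -/

import Mathlib

open MeasureTheory Real

/-!
Gibbs' inequality `∫ f log g ≤ ∫ f log f` against the generalized Gaussian density
`g ∝ exp (-b |x|^p)` bounds the entropy (in nats) by `b 𝔼|X|^p + log ∫ exp (-b |x|^p)`, and the
integral is `2 b^(-1/p) Γ(1/p + 1)`. Taking `b = 1 / (p 𝔼|X|^p)` and exponentiating gives the
bound; passing to bits only changes the base of the exponential.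
-/

theorem mul_log_sub_mul_log_le {a c : ℝ} (ha : 0 ≤ a) (hc : 0 < c) :
    a * log c - a * log a ≤ c - a := by
  rcases ha.eq_or_lt with rfl | ha
  · simpa using hc.le
  have hlog := mul_le_mul_of_nonneg_left (log_le_sub_one_of_pos (div_pos hc ha)) ha.le
  rw [log_div hc.ne' ha.ne', mul_sub, mul_sub, mul_one, mul_div_cancel₀ _ ha.ne'] at hlog
  exact hlog

theorem integral_mul_log_le_integral_mul_log {α : Type*} [MeasurableSpace α] {μ : Measure α}
    {f g : α → ℝ} (hf0 : 0 ≤ᵐ[μ] f) (hg0 : ∀ᵐ x ∂μ, 0 < g x) (hfi : Integrable f μ)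
    (hgi : Integrable g μ) (hfg : ∫ x, g x ∂μ ≤ ∫ x, f x ∂μ)
    (hflogf : Integrable (fun x => f x * log (f x)) μ)
    (hflogg : Integrable (fun x => f x * log (g x)) μ) :
    ∫ x, f x * log (g x) ∂μ ≤ ∫ x, f x * log (f x) ∂μ := by
  have hmono : ∫ x, (f x * log (g x) - f x * log (f x)) ∂μ ≤ ∫ x, (g x - f x) ∂μ :=
    integral_mono_ae (hflogg.sub hflogf) (hgi.sub hfi) <| by
    filter_upwards [hf0, hg0] with x hfx hgx using mul_log_sub_mul_log_le hfx hgx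
  rw [integral_sub hflogg hflogf, integral_sub hgi hfi] at hmono
  linarith

theorem integral_exp_neg_mul_abs_rpow {p b : ℝ} (hp : 0 < p) (hb : 0 < b) :
    ∫ x, exp (-b * |x| ^ p) = 2 * (b ^ (-1 / p) * Gamma (1 / p + 1)) := by
  rw [integral_comp_abs (f := fun x => exp (-b * x ^ p)), integral_exp_neg_mul_rpow hp hb]

theorem integral_exp_neg_mul_abs_rpow_pos {p b : ℝ} (hp : 0 < p) (hb : 0 < b) :
    0 < ∫ x, exp (-b * |x| ^ p) := by
  rw [integral_exp_neg_mul_abs_rpow hp hb]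
  have : 0 < Gamma (1 / p + 1) := Gamma_pos_of_pos (by positivity)
  positivity

theorem integrable_exp_neg_mul_abs_rpow {p b : ℝ} (hp : 0 < p) (hb : 0 < b) :
    Integrable fun x : ℝ => exp (-b * |x| ^ p) :=
  .of_integral_ne_zero (integral_exp_neg_mul_abs_rpow_pos hp hb).ne'

theorem integral_abs_rpow_mul_pos {p : ℝ} {f : ℝ → ℝ} (hf0 : ∀ x, 0 ≤ f x)
    (hf : ∫ x, f x ≠ 0) (hmom : Integrable fun x : ℝ => |x| ^ p * f x) :
    0 < ∫ x, |x| ^ p * f x := by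
  have hnonneg : 0 ≤ fun x : ℝ => |x| ^ p * f x := fun x => by have := hf0 x; positivity
  refine (integral_nonneg hnonneg).lt_of_ne fun hzero => hf ?_
  have hmom0 := (integral_eq_zero_iff_of_nonneg hnonneg hmom).mp hzero.symm
  refine integral_eq_zero_of_ae ?_
  filter_upwards [hmom0, compl_mem_ae_iff.mpr (measure_singleton (0 : ℝ))] with x hx hx0
  exact (mul_eq_zero.mp hx).resolve_left (rpow_pos_of_pos (abs_pos.mpr hx0) p).ne'

theorem neg_integral_mul_log_le_of_moment {p b : ℝ} (hp : 0 < p) (hb : 0 < b) {f : ℝ → ℝ}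
    (hf0 : ∀ x, 0 ≤ f x) (hf1 : ∫ x, f x = 1)
    (hflogf : Integrable fun x => f x * log (f x))
    (hmom : Integrable fun x : ℝ => |x| ^ p * f x) :
    -∫ x, f x * log (f x) ≤ b * (∫ x, |x| ^ p * f x) + log (∫ x, exp (-b * |x| ^ p)) := by
  set I := ∫ x, exp (-b * |x| ^ p)
  have hI : 0 < I := integral_exp_neg_mul_abs_rpow_pos hp hb
  have hfi : Integrable f := .of_integral_ne_zero (by simp [hf1])
  have hlog_g : ∀ x : ℝ, f x * log (exp (-b * |x| ^ p) / I)
      = -log I * f x + -b * (|x| ^ p * f x) := fun x => by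
    rw [log_div (exp_pos _).ne' hI.ne', log_exp]; ring
  have hflogg : Integrable fun x => f x * log (exp (-b * |x| ^ p) / I) := by
    simp_rw [hlog_g]
    exact (hfi.const_mul _).add (hmom.const_mul _)
  have hgibbs := integral_mul_log_le_integral_mul_log (ae_of_all _ hf0)
    (ae_of_all _ fun x => div_pos (exp_pos _) hI) hfi
    ((integrable_exp_neg_mul_abs_rpow hp hb).div_const I)
    (by rw [integral_div, div_self hI.ne', hf1]) hflogf hflogg
  simp_rw [hlog_g] at hgibbs
  rw [integral_add (hfi.const_mul _) (hmom.const_mul _), integral_const_mul, integral_const_mul,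
    hf1] at hgibbs
  linarith

theorem exp_neg_integral_mul_log_le {p : ℝ} (hp : 0 < p) {f : ℝ → ℝ}
    (hf0 : ∀ x, 0 ≤ f x) (hf1 : ∫ x, f x = 1)
    (hflogf : Integrable fun x => f x * log (f x))
    (hmom : Integrable fun x : ℝ => |x| ^ p * f x) :
    exp (-∫ x, f x * log (f x)) ≤
      2 * Gamma (1 / p + 1) * (p * exp 1 * ∫ x, |x| ^ p * f x) ^ (1 / p) := by
  set m := ∫ x, |x| ^ p * f x with hm_def
  have hm : 0 < m := integral_abs_rpow_mul_pos hf0 (by simp [hf1]) hmom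
  -- the choice of `b` minimizing the right-hand side of `neg_integral_mul_log_le_of_moment`
  have hb : 0 < (p * m)⁻¹ := by positivity
  have hbm : (p * m)⁻¹ * m = 1 / p := by field_simp
  have hb_rpow : (p * m)⁻¹ ^ (-1 / p) = (p * m) ^ (1 / p) := by
    rw [inv_rpow (by positivity), ← rpow_neg (by positivity)]; ring_nf
  have hmax := neg_integral_mul_log_le_of_moment hp hb hf0 hf1 hflogf hmom
  rw [← hm_def, hbm, integral_exp_neg_mul_abs_rpow hp hb, hb_rpow] at hmax
  calc exp (-∫ x, f x * log (f x))
      ≤ exp (1 / p + log (2 * ((p * m) ^ (1 / p) * Gamma (1 / p + 1)))) := exp_le_exp.mpr hmax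
    _ = 2 * Gamma (1 / p + 1) * (p * exp 1 * m) ^ (1 / p) := by
      have : 0 < Gamma (1 / p + 1) := Gamma_pos_of_pos (by positivity)
      rw [exp_add, exp_log (by positivity), mul_right_comm p, mul_rpow (by positivity)
        (exp_pos 1).le, exp_one_rpow]
      ring

theorem rpow_integral_mul_logb {α : Type*} [MeasurableSpace α] {μ : Measure α} {a : ℝ}
    (ha0 : 0 < a) (ha1 : a ≠ 1) (f : α → ℝ) :
    a ^ (∫ x, f x * logb a (f x) ∂μ) = exp (∫ x, f x * log (f x) ∂μ) := by
  have hlog : log a ≠ 0 := log_ne_zero_of_pos_of_ne_one ha0 ha1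
  simp_rw [logb, mul_div_assoc', integral_div, rpow_def_of_pos ha0, mul_div_cancel₀ _ hlog]

theorem Lp_norm_entropy_lower_bound_general (p : ℝ) (hp : 1 ≤ p)
    (f : ℝ → ℝ) (hnn : ∀ x, 0 ≤ f x)
    (hone : ∫ x : ℝ, f x = 1)
    (hent_int : Integrable (fun x : ℝ => f x * Real.logb 2 (f x)))
    (hmom_int : Integrable (fun x : ℝ => |x| ^ p * f x)) :
    (∫ x : ℝ, |x| ^ p * f x) ^ (1 / p)
      ≥ (2 : ℝ) ^ (-∫ x : ℝ, f x * Real.logb 2 (f x)) /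
        (2 * Real.Gamma ((p + 1) / p) * (p * Real.exp 1) ^ (1 / p)) := by
  have hp0 : 0 < p := by linarith
  have hflogf : Integrable fun x => f x * log (f x) :=
    (hent_int.mul_const (log 2)).congr (ae_of_all _ fun x => by
      simp only [logb, mul_div_assoc', div_mul_cancel₀ _ (log_pos one_lt_two).ne'])
  have hGamma_arg : (p + 1) / p = 1 / p + 1 := by field_simp; ring
  have hG : 0 < Gamma (1 / p + 1) := Gamma_pos_of_pos (by positivity)
  have hm := integral_abs_rpow_mul_pos hnn (by simp [hone]) hmom_int
  rw [ge_iff_le, div_le_iff₀ (by rw [hGamma_arg]; positivity), rpow_neg zero_le_two,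
    rpow_integral_mul_logb two_pos (by norm_num), ← exp_neg, hGamma_arg]
  calc exp (-∫ x, f x * log (f x))
      ≤ 2 * Gamma (1 / p + 1) * (p * exp 1 * ∫ x, |x| ^ p * f x) ^ (1 / p) :=
        exp_neg_integral_mul_log_le hp0 hnn hone hflogf hmom_int
    _ = _ := by rw [mul_rpow (by positivity) hm.le]; ring

/-- Entropy lower bound on the `L^p` norm: if `X` has density `f` with finite differential
entropy `h(X)` (in bits), then `E[|X|^p]^{1/p} ≥ 2^{h(X)} / (2 Γ((p+1)/p) (p e)^{1/p})`. -/
theorem Lp_norm_entropy_lower_bound (p : ℝ) (hp : 1 ≤ p)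
    (f : ℝ → ℝ) (hf : Measurable f) (hnn : ∀ x, 0 ≤ f x)
    (hone : ∫ x : ℝ, f x = 1)
    (hent_int : Integrable (fun x : ℝ => f x * Real.logb 2 (f x)))
    (hmom_int : Integrable (fun x : ℝ => |x| ^ p * f x)) :
    (∫ x : ℝ, |x| ^ p * f x) ^ (1 / p)
      ≥ (2 : ℝ) ^ (-∫ x : ℝ, f x * Real.logb 2 (f x)) /
        (2 * Real.Gamma ((p + 1) / p) * (p * Real.exp 1) ^ (1 / p)) :=
  Lp_norm_entropy_lower_bound_general p hp f hnn hone hent_int hmom_int
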